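/- Let (φ, ω) be a twisted partial action of a Hopf algebra H on an algebra A satisfying the partial cocycle condition and the unit conditions ω(h ⊗ 1_H) = ω(1_H ⊗ h) = φ(h ⊗ 1_A). Then the product on A ⊗ H given by (a ⊗ h)(b ⊗ g) = Σ a φ(h₍₁₎ ⊗ b) ω(h₍₂₎ ⊗ g₍₁₎) ⊗ h₍₃₎ g₍₂₎ is associative. -/

import Mathlib

open TensorProduct

variable {R A V H : Type*} [CommRing R] [Ring A] [Algebra R A]
  [AddCommGroup V] [Module R V] [Ring H] [HopfAlgebra R H]

/-- (μ_A ⊗ V) ∘ (A ⊗ ψ) ∘ (ψ ⊗ A) : (V ⊗ A) ⊗ A → A ⊗ V -/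
noncomputable def psiMulLHS (ψ : V ⊗[R] A →ₗ[R] A ⊗[R] V) :
    (V ⊗[R] A) ⊗[R] A →ₗ[R] A ⊗[R] V :=
  TensorProduct.map (LinearMap.mul' R A) LinearMap.id
    ∘ₗ (TensorProduct.assoc R A A V).symm.toLinearMap
    ∘ₗ LinearMap.lTensor A ψ
    ∘ₗ (TensorProduct.assoc R A V A).toLinearMap
    ∘ₗ LinearMap.rTensor A ψ

/-- ψ ∘ (V ⊗ μ_A) : (V ⊗ A) ⊗ A → A ⊗ V -/
noncomputable def psiMulRHS (ψ : V ⊗[R] A →ₗ[R] A ⊗[R] V) :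
    (V ⊗[R] A) ⊗[R] A →ₗ[R] A ⊗[R] V :=
  ψ ∘ₗ LinearMap.lTensor V (LinearMap.mul' R A)
    ∘ₗ (TensorProduct.assoc R V A A).toLinearMap

/-- ∇ = (μ_A ⊗ V) ∘ (A ⊗ ψ) ∘ (A ⊗ V ⊗ η_A) : A ⊗ V → A ⊗ V -/
noncomputable def nabla (ψ : V ⊗[R] A →ₗ[R] A ⊗[R] V) :
    A ⊗[R] V →ₗ[R] A ⊗[R] V :=
  TensorProduct.map (LinearMap.mul' R A) LinearMap.id
    ∘ₗ (TensorProduct.assoc R A A V).symm.toLinearMap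
    ∘ₗ LinearMap.lTensor A ψ
    ∘ₗ LinearMap.lTensor A ((TensorProduct.mk R V A).flip 1)

/-- ψ(h ⊗ a) = Σ φ(h₍₁₎ ⊗ a) ⊗ h₍₂₎. -/
noncomputable def psiOf (φ : H ⊗[R] A →ₗ[R] A) : H ⊗[R] A →ₗ[R] A ⊗[R] H :=
  LinearMap.rTensor H φ
    ∘ₗ (TensorProduct.assoc R H A H).symm.toLinearMap
    ∘ₗ LinearMap.lTensor H (TensorProduct.comm R H A).toLinearMap
    ∘ₗ (TensorProduct.assoc R H H A).toLinearMap
    ∘ₗ LinearMap.rTensor A (Coalgebra.comul : H →ₗ[R] H ⊗[R] H)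

/-- σ(h ⊗ g) = Σ ω(h₍₁₎ ⊗ g₍₁₎) ⊗ h₍₂₎g₍₂₎. -/
noncomputable def sigmaOf (ω : H ⊗[R] H →ₗ[R] A) : H ⊗[R] H →ₗ[R] A ⊗[R] H :=
  TensorProduct.map ω (LinearMap.mul' R H)
    ∘ₗ (TensorProduct.tensorTensorTensorComm R H H H H).toLinearMap
    ∘ₗ TensorProduct.map (Coalgebra.comul : H →ₗ[R] H ⊗[R] H)
        (Coalgebra.comul : H →ₗ[R] H ⊗[R] H)

/-- Condition (ii) of a twisted partial action:
φ(h ⊗ ab) = Σ φ(h₍₁₎ ⊗ a) φ(h₍₂₎ ⊗ b), as maps H ⊗ (A ⊗ A) → A. -/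
def IsPartiallyMultiplicative (φ : H ⊗[R] A →ₗ[R] A) : Prop :=
  φ ∘ₗ LinearMap.lTensor H (LinearMap.mul' R A) =
    LinearMap.mul' R A ∘ₗ TensorProduct.map φ φ
      ∘ₗ (TensorProduct.tensorTensorTensorComm R H H A A).toLinearMap
      ∘ₗ LinearMap.rTensor (A ⊗[R] A) (Coalgebra.comul : H →ₗ[R] H ⊗[R] H)

/-- Twisted condition LHS: (μ_A ⊗ V) ∘ (A ⊗ ψ) ∘ (σ ⊗ A) : (V ⊗ V) ⊗ A → A ⊗ V. -/
noncomputable def twistedLHS (ψ : V ⊗[R] A →ₗ[R] A ⊗[R] V)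
    (σ : V ⊗[R] V →ₗ[R] A ⊗[R] V) : (V ⊗[R] V) ⊗[R] A →ₗ[R] A ⊗[R] V :=
  TensorProduct.map (LinearMap.mul' R A) LinearMap.id
    ∘ₗ (TensorProduct.assoc R A A V).symm.toLinearMap
    ∘ₗ LinearMap.lTensor A ψ
    ∘ₗ (TensorProduct.assoc R A V A).toLinearMap
    ∘ₗ LinearMap.rTensor A σ

/-- Twisted condition RHS: (μ_A ⊗ V) ∘ (A ⊗ σ) ∘ (ψ ⊗ V) ∘ (V ⊗ ψ) : V ⊗ (V ⊗ A) → A ⊗ V. -/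
noncomputable def twistedRHS (ψ : V ⊗[R] A →ₗ[R] A ⊗[R] V)
    (σ : V ⊗[R] V →ₗ[R] A ⊗[R] V) : V ⊗[R] (V ⊗[R] A) →ₗ[R] A ⊗[R] V :=
  TensorProduct.map (LinearMap.mul' R A) LinearMap.id
    ∘ₗ (TensorProduct.assoc R A A V).symm.toLinearMap
    ∘ₗ LinearMap.lTensor A σ
    ∘ₗ (TensorProduct.assoc R A V V).toLinearMap
    ∘ₗ LinearMap.rTensor V ψ
    ∘ₗ (TensorProduct.assoc R V A V).symm.toLinearMap
    ∘ₗ LinearMap.lTensor V ψ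

/-- Cocycle condition LHS: (μ_A ⊗ V) ∘ (A ⊗ σ) ∘ (σ ⊗ V) : (V ⊗ V) ⊗ V → A ⊗ V. -/
noncomputable def cocycleLHS (σ : V ⊗[R] V →ₗ[R] A ⊗[R] V) :
    (V ⊗[R] V) ⊗[R] V →ₗ[R] A ⊗[R] V :=
  TensorProduct.map (LinearMap.mul' R A) LinearMap.id
    ∘ₗ (TensorProduct.assoc R A A V).symm.toLinearMap
    ∘ₗ LinearMap.lTensor A σ
    ∘ₗ (TensorProduct.assoc R A V V).toLinearMap
    ∘ₗ LinearMap.rTensor V σ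

/-- Cocycle condition RHS: (μ_A ⊗ V) ∘ (A ⊗ σ) ∘ (ψ ⊗ V) ∘ (V ⊗ σ) : V ⊗ (V ⊗ V) → A ⊗ V. -/
noncomputable def cocycleRHS (ψ : V ⊗[R] A →ₗ[R] A ⊗[R] V)
    (σ : V ⊗[R] V →ₗ[R] A ⊗[R] V) : V ⊗[R] (V ⊗[R] V) →ₗ[R] A ⊗[R] V :=
  TensorProduct.map (LinearMap.mul' R A) LinearMap.id
    ∘ₗ (TensorProduct.assoc R A A V).symm.toLinearMap
    ∘ₗ LinearMap.lTensor A σ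
    ∘ₗ (TensorProduct.assoc R A V V).toLinearMap
    ∘ₗ LinearMap.rTensor V ψ
    ∘ₗ (TensorProduct.assoc R V A V).symm.toLinearMap
    ∘ₗ LinearMap.lTensor V σ

/-- Auxiliary map V ⊗ (A ⊗ V) → A ⊗ V used in the weak crossed product. -/
noncomputable def wcpAux (ψ : V ⊗[R] A →ₗ[R] A ⊗[R] V)
    (σ : V ⊗[R] V →ₗ[R] A ⊗[R] V) : V ⊗[R] (A ⊗[R] V) →ₗ[R] A ⊗[R] V :=
  TensorProduct.map (LinearMap.mul' R A) LinearMap.id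
    ∘ₗ (TensorProduct.assoc R A A V).symm.toLinearMap
    ∘ₗ LinearMap.lTensor A σ
    ∘ₗ (TensorProduct.assoc R A V V).toLinearMap
    ∘ₗ LinearMap.rTensor V ψ
    ∘ₗ (TensorProduct.assoc R V A V).symm.toLinearMap

/-- The weak crossed product multiplication
μ_{A⊗V} = (μ_A ⊗ V) ∘ (μ_A ⊗ σ) ∘ (A ⊗ ψ ⊗ V) on A ⊗ V. -/
noncomputable def wcpMul (ψ : V ⊗[R] A →ₗ[R] A ⊗[R] V)
    (σ : V ⊗[R] V →ₗ[R] A ⊗[R] V) :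
    (A ⊗[R] V) ⊗[R] (A ⊗[R] V) →ₗ[R] A ⊗[R] V :=
  TensorProduct.map (LinearMap.mul' R A) LinearMap.id
    ∘ₗ (TensorProduct.assoc R A A V).symm.toLinearMap
    ∘ₗ LinearMap.lTensor A (wcpAux ψ σ)
    ∘ₗ (TensorProduct.assoc R A V (A ⊗[R] V)).toLinearMap

/-- Partial twisted condition LHS: μ_A ∘ (A ⊗ ω) ∘ (ψ ⊗ H) ∘ (H ⊗ ψ),
i.e. (h ⊗ g ⊗ a) ↦ Σ φ(h₍₁₎ ⊗ φ(g₍₁₎ ⊗ a)) ω(h₍₂₎ ⊗ g₍₂₎). -/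
noncomputable def partialTwistedLHS (φ : H ⊗[R] A →ₗ[R] A)
    (ω : H ⊗[R] H →ₗ[R] A) : H ⊗[R] (H ⊗[R] A) →ₗ[R] A :=
  LinearMap.mul' R A
    ∘ₗ LinearMap.lTensor A ω
    ∘ₗ (TensorProduct.assoc R A H H).toLinearMap
    ∘ₗ LinearMap.rTensor H (psiOf φ)
    ∘ₗ (TensorProduct.assoc R H A H).symm.toLinearMap
    ∘ₗ LinearMap.lTensor H (psiOf φ)

/-- Partial twisted condition RHS: μ_A ∘ (A ⊗ φ) ∘ (σ ⊗ A),
i.e. (h ⊗ g ⊗ a) ↦ Σ ω(h₍₁₎ ⊗ g₍₁₎) φ(h₍₂₎g₍₂₎ ⊗ a). -/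
noncomputable def partialTwistedRHS (φ : H ⊗[R] A →ₗ[R] A)
    (ω : H ⊗[R] H →ₗ[R] A) : (H ⊗[R] H) ⊗[R] A →ₗ[R] A :=
  LinearMap.mul' R A
    ∘ₗ LinearMap.lTensor A φ
    ∘ₗ (TensorProduct.assoc R A H A).toLinearMap
    ∘ₗ LinearMap.rTensor A (sigmaOf ω)

/-- Partial cocycle condition LHS:
(h ⊗ g ⊗ l) ↦ Σ φ(h₍₁₎ ⊗ ω(g₍₁₎ ⊗ l₍₁₎)) ω(h₍₂₎ ⊗ g₍₂₎l₍₂₎),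
i.e. μ_A ∘ (A ⊗ ω) ∘ (ψ ⊗ H) ∘ (H ⊗ σ). -/
noncomputable def partialCocycleLHS (φ : H ⊗[R] A →ₗ[R] A)
    (ω : H ⊗[R] H →ₗ[R] A) : H ⊗[R] (H ⊗[R] H) →ₗ[R] A :=
  LinearMap.mul' R A
    ∘ₗ LinearMap.lTensor A ω
    ∘ₗ (TensorProduct.assoc R A H H).toLinearMap
    ∘ₗ LinearMap.rTensor H (psiOf φ)
    ∘ₗ (TensorProduct.assoc R H A H).symm.toLinearMap
    ∘ₗ LinearMap.lTensor H (sigmaOf ω)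

/-- Partial cocycle condition RHS:
(h ⊗ g ⊗ l) ↦ Σ ω(h₍₁₎ ⊗ g₍₁₎) ω(h₍₂₎g₍₂₎ ⊗ l), i.e. μ_A ∘ (A ⊗ ω) ∘ (σ ⊗ H). -/
noncomputable def partialCocycleRHS (ω : H ⊗[R] H →ₗ[R] A) :
    (H ⊗[R] H) ⊗[R] H →ₗ[R] A :=
  LinearMap.mul' R A
    ∘ₗ LinearMap.lTensor A ω
    ∘ₗ (TensorProduct.assoc R A H H).toLinearMap
    ∘ₗ LinearMap.rTensor H (sigmaOf ω)

/-!
Put `ψ(h ⊗ a) = Σ φ(h₁ ⊗ a) ⊗ h₂` and `σ(h ⊗ g) = Σ ω(h₁ ⊗ g₁) ⊗ h₂g₂`; the product on `A ⊗ H` is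
the weak crossed product of `(ψ, σ)`. With any module `V` in place of `H`, this product is
associative as soon as `ψ` is multiplicative and `(ψ, σ)` satisfy the twisted and the cocycle
conditions, by a direct computation on generators.

For the pair built from `(φ, ω)`, coassociativity and multiplicativity of `Δ` turn each side of
these three conditions into the corresponding side of the partial condition evaluated on the first
Sweedler legs, tensored with the product of the second legs; for instance
`twistedLHS (x ⊗ a) = Σ partialTwistedRHS (x₁ ⊗ a) ⊗ x₂` for `x = h ⊗ g`, with `x₂ = h₂g₂`.
Hence the partial conditions on `(φ, ω)` give the conditions on `(ψ, σ)`.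
-/

section WeakCrossedProduct

variable {W : Type*} [AddCommGroup W] [Module R W]

lemma map_mul'_id_assoc_symm_tmul (a : A) (X : A ⊗[R] V) :
    TensorProduct.map (LinearMap.mul' R A) LinearMap.id
      ((TensorProduct.assoc R A A V).symm (a ⊗ₜ X)) = a • X := by
  induction X using TensorProduct.induction_on with
  | zero => simp
  | tmul x v => simp [TensorProduct.smul_tmul']
  | add X Y hX hY => simp only [tmul_add, map_add, hX, hY, smul_add]

noncomputable def extendLeft (χ : V ⊗[R] W →ₗ[R] A ⊗[R] V) :
    (A ⊗[R] V) ⊗[R] W →ₗ[R] A ⊗[R] V :=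
  TensorProduct.map (LinearMap.mul' R A) LinearMap.id
    ∘ₗ (TensorProduct.assoc R A A V).symm.toLinearMap
    ∘ₗ LinearMap.lTensor A χ ∘ₗ (TensorProduct.assoc R A V W).toLinearMap

lemma extendLeft_tmul (χ : V ⊗[R] W →ₗ[R] A ⊗[R] V) (a : A) (v : V) (w : W) :
    extendLeft χ ((a ⊗ₜ v) ⊗ₜ w) = a • χ (v ⊗ₜ w) := by
  simp [extendLeft, map_mul'_id_assoc_symm_tmul]

lemma extendLeft_smul_tmul (χ : V ⊗[R] W →ₗ[R] A ⊗[R] V) (a : A) (X : A ⊗[R] V) (w : W) :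
    extendLeft χ ((a • X) ⊗ₜ w) = a • extendLeft χ (X ⊗ₜ w) := by
  induction X using TensorProduct.induction_on with
  | zero => simp
  | tmul x v => simp [TensorProduct.smul_tmul', extendLeft_tmul, mul_smul]
  | add X Y hX hY => simp only [smul_add, add_tmul, map_add, hX, hY]

variable (ψ : V ⊗[R] A →ₗ[R] A ⊗[R] V) (σ : V ⊗[R] V →ₗ[R] A ⊗[R] V)

lemma wcpAux_tmul_tmul (v : V) (c : A) (u : V) :
    wcpAux ψ σ (v ⊗ₜ (c ⊗ₜ u)) = extendLeft σ (ψ (v ⊗ₜ c) ⊗ₜ u) := rfl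

lemma wcpMul_tmul (a : A) (v : V) (Y : A ⊗[R] V) :
    wcpMul ψ σ ((a ⊗ₜ v) ⊗ₜ Y) = a • wcpAux ψ σ (v ⊗ₜ Y) := by
  simp [wcpMul, map_mul'_id_assoc_symm_tmul]

lemma wcpMul_tmul_tmul (X : A ⊗[R] V) (c : A) (u : V) :
    wcpMul ψ σ (X ⊗ₜ (c ⊗ₜ u)) = extendLeft σ (extendLeft ψ (X ⊗ₜ c) ⊗ₜ u) := by
  induction X using TensorProduct.induction_on with
  | zero => simp
  | tmul a v => rw [wcpMul_tmul, wcpAux_tmul_tmul, extendLeft_tmul, extendLeft_smul_tmul]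
  | add X Y hX hY => simp only [add_tmul, map_add, hX, hY]

variable {ψ σ}

lemma wcpAux_tmul_smul (hm : psiMulLHS ψ = psiMulRHS ψ) (v : V) (b : A) (Y : A ⊗[R] V) :
    wcpAux ψ σ (v ⊗ₜ (b • Y)) = wcpMul ψ σ (ψ (v ⊗ₜ b) ⊗ₜ Y) := by
  induction Y using TensorProduct.induction_on with
  | zero => simp
  | tmul c u =>
    rw [TensorProduct.smul_tmul', smul_eq_mul, wcpAux_tmul_tmul, wcpMul_tmul_tmul]
    exact congrArg (fun X => extendLeft σ (X ⊗ₜ u)) (LinearMap.congr_fun hm ((v ⊗ₜ b) ⊗ₜ c)).symm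
  | add Y Z hY hZ => simp only [smul_add, tmul_add, map_add, hY, hZ]

lemma extendLeft_extendLeft_tmul {χ : V ⊗[R] W →ₗ[R] A ⊗[R] V}
    (hχ : ∀ v w x, extendLeft χ (σ (v ⊗ₜ w) ⊗ₜ x) = wcpAux ψ σ (v ⊗ₜ χ (w ⊗ₜ x)))
    (P : A ⊗[R] V) (w : V) (x : W) :
    extendLeft χ (extendLeft σ (P ⊗ₜ w) ⊗ₜ x) = wcpMul ψ σ (P ⊗ₜ χ (w ⊗ₜ x)) := by
  induction P using TensorProduct.induction_on with
  | zero => simp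
  | tmul a v => rw [extendLeft_tmul, extendLeft_smul_tmul, hχ, wcpMul_tmul]
  | add P Q hP hQ => simp only [add_tmul, map_add, hP, hQ]

lemma extendLeft_wcpMul_tmul (hm : psiMulLHS ψ = psiMulRHS ψ)
    (hc : cocycleLHS σ = cocycleRHS ψ σ ∘ₗ (TensorProduct.assoc R V V V).toLinearMap)
    (P Q : A ⊗[R] V) (u : V) :
    extendLeft σ (wcpMul ψ σ (P ⊗ₜ Q) ⊗ₜ u) = wcpMul ψ σ (P ⊗ₜ extendLeft σ (Q ⊗ₜ u)) := by
  induction Q using TensorProduct.induction_on with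
  | zero => simp
  | add Q Q' hQ hQ' => simp only [add_tmul, tmul_add, map_add, hQ, hQ']
  | tmul c w =>
    induction P using TensorProduct.induction_on with
    | zero => simp
    | add P P' hP hP' => simp only [add_tmul, map_add, hP, hP']
    | tmul a v =>
      rw [wcpMul_tmul, wcpAux_tmul_tmul, extendLeft_smul_tmul,
        extendLeft_extendLeft_tmul (fun v w u => LinearMap.congr_fun hc ((v ⊗ₜ w) ⊗ₜ u)),
        extendLeft_tmul, wcpMul_tmul, wcpAux_tmul_smul hm]

theorem wcpMul_assoc (hm : psiMulLHS ψ = psiMulRHS ψ)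
    (ht : twistedLHS ψ σ = twistedRHS ψ σ ∘ₗ (TensorProduct.assoc R V V A).toLinearMap)
    (hc : cocycleLHS σ = cocycleRHS ψ σ ∘ₗ (TensorProduct.assoc R V V V).toLinearMap) :
    wcpMul ψ σ ∘ₗ LinearMap.rTensor (A ⊗[R] V) (wcpMul ψ σ) =
      wcpMul ψ σ ∘ₗ LinearMap.lTensor (A ⊗[R] V) (wcpMul ψ σ)
        ∘ₗ (TensorProduct.assoc R (A ⊗[R] V) (A ⊗[R] V) (A ⊗[R] V)).toLinearMap := by
  ext a v b w c u
  have ht' : ∀ v w c, extendLeft ψ (σ (v ⊗ₜ w) ⊗ₜ c) = wcpAux ψ σ (v ⊗ₜ ψ (w ⊗ₜ c)) :=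
    fun v w c => LinearMap.congr_fun ht ((v ⊗ₜ w) ⊗ₜ c)
  simp only [AlgebraTensorModule.curry_apply, LinearMap.restrictScalars_self, curry_apply,
    LinearMap.comp_apply, LinearMap.rTensor_tmul, LinearEquiv.coe_coe, assoc_tmul,
    LinearMap.lTensor_tmul]
  calc wcpMul ψ σ (wcpMul ψ σ ((a ⊗ₜ v) ⊗ₜ (b ⊗ₜ w)) ⊗ₜ (c ⊗ₜ u))
      = a • extendLeft σ (wcpMul ψ σ (ψ (v ⊗ₜ b) ⊗ₜ ψ (w ⊗ₜ c)) ⊗ₜ u) := by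
        rw [wcpMul_tmul, wcpAux_tmul_tmul, wcpMul_tmul_tmul, extendLeft_smul_tmul,
          extendLeft_smul_tmul, extendLeft_extendLeft_tmul ht']
    _ = wcpMul ψ σ ((a ⊗ₜ v) ⊗ₜ wcpMul ψ σ ((b ⊗ₜ w) ⊗ₜ (c ⊗ₜ u))) := by
        rw [extendLeft_wcpMul_tmul hm hc, wcpMul_tmul, wcpMul_tmul, wcpAux_tmul_smul hm,
          wcpAux_tmul_tmul]

end WeakCrossedProduct

section TensorLemmas

variable {R : Type*} [CommSemiring R] {M N P Q X : Type*} [AddCommMonoid M] [Module R M]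
  [AddCommMonoid N] [Module R N] [AddCommMonoid P] [Module R P] [AddCommMonoid Q] [Module R Q]
  [AddCommMonoid X] [Module R X]

open LinearMap

theorem TensorProduct.ext_comp_flip_mk {f g : M ⊗[R] N →ₗ[R] P}
    (h : ∀ n, f ∘ₗ (TensorProduct.mk R M N).flip n = g ∘ₗ (TensorProduct.mk R M N).flip n) :
    f = g :=
  TensorProduct.ext' fun m n => LinearMap.congr_fun (h n) m

theorem LinearMap.rTensor_comp_flip_mk_comp (f : M →ₗ[R] N) (p : P) (g : X →ₗ[R] M) :
    rTensor P f ∘ₗ (TensorProduct.mk R M P).flip p ∘ₗ g =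
      (TensorProduct.mk R N P).flip p ∘ₗ f ∘ₗ g :=
  rfl

theorem LinearMap.lTensor_comp_assoc_comp_flip_mk (g : N ⊗[R] P →ₗ[R] Q) (p : P) :
    lTensor M g ∘ₗ (TensorProduct.assoc R M N P).toLinearMap ∘ₗ
        (TensorProduct.mk R (M ⊗[R] N) P).flip p =
      lTensor M (g ∘ₗ (TensorProduct.mk R N P).flip p) := by
  ext; rfl

theorem LinearMap.lTensor_comp_assoc_comp_flip_mk_comp (g : N ⊗[R] P →ₗ[R] Q) (p : P)
    (f : X →ₗ[R] M ⊗[R] N) :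
    lTensor M g ∘ₗ (TensorProduct.assoc R M N P).toLinearMap ∘ₗ
        (TensorProduct.mk R (M ⊗[R] N) P).flip p ∘ₗ f =
      lTensor M (g ∘ₗ (TensorProduct.mk R N P).flip p) ∘ₗ f := by
  rw [← lTensor_comp_assoc_comp_flip_mk]; rfl

theorem TensorProduct.map_comp_tensorTensorTensorComm_comp_flip_tmul {M' N' : Type*}
    [AddCommMonoid M'] [Module R M'] [AddCommMonoid N'] [Module R N']
    (F : M ⊗[R] P →ₗ[R] M') (G : N ⊗[R] Q →ₗ[R] N') (p : P) (q : Q)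
    (f : X →ₗ[R] M ⊗[R] N) :
    map F G ∘ₗ (tensorTensorTensorComm R M N P Q).toLinearMap ∘ₗ
        (TensorProduct.mk R (M ⊗[R] N) (P ⊗[R] Q)).flip (p ⊗ₜ q) ∘ₗ f =
      map (F ∘ₗ (TensorProduct.mk R M P).flip p) (G ∘ₗ (TensorProduct.mk R N Q).flip q) ∘ₗ f := by
  simp only [← LinearMap.comp_assoc]
  congr 1
  ext; rfl

end TensorLemmas

section CoalgebraLemmas

variable {R : Type*} [CommSemiring R] {C D M N : Type*} [AddCommMonoid C] [Module R C]
  [Coalgebra R C] [AddCommMonoid D] [Module R D] [Coalgebra R D]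
  [AddCommMonoid M] [Module R M] [AddCommMonoid N] [Module R N]

open Coalgebra

theorem TensorProduct.comul_eq_tensorTensorTensorComm_comp_map :
    (comul : C ⊗[R] D →ₗ[R] (C ⊗[R] D) ⊗[R] (C ⊗[R] D)) =
      (tensorTensorTensorComm R C C D D).toLinearMap ∘ₗ map comul comul := by
  rw [comul_def, AlgebraTensorModule.tensorTensorTensorComm_eq, AlgebraTensorModule.map_eq]

theorem map_comp_comul_comp_comul (G : C ⊗[R] C →ₗ[R] M) (p : C →ₗ[R] N) :
    map (G ∘ₗ comul) p ∘ₗ comul =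
      map G p ∘ₗ (TensorProduct.assoc R C C C).symm.toLinearMap ∘ₗ LinearMap.lTensor C comul ∘ₗ
        comul := by
  rw [coassoc_symm, LinearMap.rTensor, ← LinearMap.comp_assoc, ← map_comp, LinearMap.comp_id]

theorem TensorProduct.comul_comp_assoc {E : Type*} [AddCommMonoid E] [Module R E]
    [Coalgebra R E] :
    comul ∘ₗ (TensorProduct.assoc R C D E).toLinearMap =
      map (TensorProduct.assoc R C D E).toLinearMap (TensorProduct.assoc R C D E).toLinearMap ∘ₗ
        comul :=
  (Coalgebra.TensorProduct.assoc R R C D E).map_comp_comul.symm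

variable {B : Type*} [Semiring B] [Bialgebra R B]

theorem Bialgebra.comul_comp_mul' :
    comul ∘ₗ LinearMap.mul' R B = map (LinearMap.mul' R B) (LinearMap.mul' R B) ∘ₗ comul := by
  rw [TensorProduct.comul_eq_tensorTensorTensorComm_comp_map, ← LinearMap.comp_assoc,
    ← LinearMap.mul'_tensor]
  ext x y
  simp

theorem Bialgebra.comul_comp_map_id_mul' :
    comul ∘ₗ map (LinearMap.id : B →ₗ[R] B) (LinearMap.mul' R B) =
      map (map LinearMap.id (LinearMap.mul' R B)) (map LinearMap.id (LinearMap.mul' R B)) ∘ₗ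
        comul := by
  have hmap : map (comul : B →ₗ[R] B ⊗[R] B) (map (LinearMap.mul' R B) (LinearMap.mul' R B) ∘ₗ
      (comul : B ⊗[R] B →ₗ[R] _)) = map (map LinearMap.id LinearMap.id)
        (map (LinearMap.mul' R B) (LinearMap.mul' R B)) ∘ₗ map comul comul := by
    rw [← map_comp, map_id, LinearMap.id_comp]
  rw [TensorProduct.comul_eq_tensorTensorTensorComm_comp_map (C := B), LinearMap.comp_assoc,
    ← map_comp, LinearMap.comp_id, comul_comp_mul', hmap, ← LinearMap.comp_assoc,
    tensorTensorTensorComm_comp_map, LinearMap.comp_assoc,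
    ← TensorProduct.comul_eq_tensorTensorTensorComm_comp_map]

end CoalgebraLemmas

section PartialAction

open Coalgebra LinearMap

lemma psiOf_comp_flip_mk (φ : H ⊗[R] A →ₗ[R] A) (a : A) :
    psiOf φ ∘ₗ (TensorProduct.mk R H A).flip a =
      rTensor H (φ ∘ₗ (TensorProduct.mk R H A).flip a) ∘ₗ comul := by
  ext h
  simp only [psiOf, comp_apply, LinearEquiv.coe_coe, flip_apply, TensorProduct.mk_apply,
    rTensor_tmul]
  induction comul (R := R) h using TensorProduct.induction_on with
  | zero => simp
  | tmul x y => rfl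
  | add X Y hX hY => simp only [add_tmul, map_add, hX, hY]

lemma sigmaOf_eq (ω : H ⊗[R] H →ₗ[R] A) :
    sigmaOf ω = TensorProduct.map ω (mul' R H) ∘ₗ comul := rfl

lemma map_mul'_id_comp_lTensor_comp_sigmaOf {N : Type*} [AddCommGroup N] [Module R N]
    (ω : H ⊗[R] H →ₗ[R] A) (f : H →ₗ[R] A) (g : H →ₗ[R] N) :
    TensorProduct.map (mul' R A) LinearMap.id
        ∘ₗ (TensorProduct.assoc R A A N).symm.toLinearMap
        ∘ₗ lTensor A (TensorProduct.map f g ∘ₗ comul) ∘ₗ sigmaOf ω =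
      TensorProduct.map ((mul' R A ∘ₗ TensorProduct.map ω (f ∘ₗ mul' R H))
        ∘ₗ comul) (g ∘ₗ mul' R H) ∘ₗ comul := by
  -- `coassoc_simps` cannot reassociate `Δ` of `H ⊗ H` once it is unfolded, so coassociativity
  -- is applied to it first.
  rw [map_comp_comul_comp_comul]
  simp only [sigmaOf, Bialgebra.comul_comp_mul',
    TensorProduct.comul_eq_tensorTensorTensorComm_comp_map, coassoc_simps]

variable (φ : H ⊗[R] A →ₗ[R] A) (ω : H ⊗[R] H →ₗ[R] A)

lemma psiMulLHS_eq_psiMulRHS_of_isPartiallyMultiplicative (h2 : IsPartiallyMultiplicative φ) :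
    psiMulLHS (psiOf φ) = psiMulRHS (psiOf φ) := by
  refine TensorProduct.ext_comp_flip_mk fun b => TensorProduct.ext_comp_flip_mk fun a => ?_
  have hab : φ ∘ₗ (TensorProduct.mk R H A).flip (a * b) = mul' R A ∘ₗ
      TensorProduct.map (φ ∘ₗ (TensorProduct.mk R H A).flip a)
        (φ ∘ₗ (TensorProduct.mk R H A).flip b) ∘ₗ comul := by
    rw [show φ ∘ₗ (TensorProduct.mk R H A).flip (a * b) = (φ ∘ₗ lTensor H (mul' R A)) ∘ₗ
      (TensorProduct.mk R H (A ⊗[R] A)).flip (a ⊗ₜ b) from rfl, h2]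
    simp only [comp_assoc, rTensor_comp_flip_mk,
      TensorProduct.map_comp_tensorTensorTensorComm_comp_flip_tmul]
  have hRHS : psiMulRHS (psiOf φ) ∘ₗ (TensorProduct.mk R (H ⊗[R] A) A).flip b ∘ₗ
      (TensorProduct.mk R H A).flip a = psiOf φ ∘ₗ (TensorProduct.mk R H A).flip (a * b) := rfl
  rw [comp_assoc, comp_assoc, hRHS, psiOf_comp_flip_mk, hab]
  simp only [psiMulLHS, comp_assoc, rTensor_comp_flip_mk_comp, lTensor_comp_assoc_comp_flip_mk_comp,
    psiOf_comp_flip_mk]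
  simp only [coassoc_simps]

lemma twistedLHS_comp_flip_mk (a : A) :
    twistedLHS (psiOf φ) (sigmaOf ω) ∘ₗ (TensorProduct.mk R (H ⊗[R] H) A).flip a =
      sigmaOf (partialTwistedRHS φ ω ∘ₗ (TensorProduct.mk R (H ⊗[R] H) A).flip a) := by
  have hpartial : partialTwistedRHS φ ω ∘ₗ (TensorProduct.mk R (H ⊗[R] H) A).flip a =
      (mul' R A ∘ₗ TensorProduct.map ω
        ((φ ∘ₗ (TensorProduct.mk R H A).flip a) ∘ₗ mul' R H)) ∘ₗ comul := by
    simp only [partialTwistedRHS, comp_assoc, rTensor_comp_flip_mk,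
      lTensor_comp_assoc_comp_flip_mk_comp]
    simp only [sigmaOf_eq, coassoc_simps]
  simp only [twistedLHS, comp_assoc, rTensor_comp_flip_mk, lTensor_comp_assoc_comp_flip_mk_comp,
    psiOf_comp_flip_mk]
  rw [rTensor, map_mul'_id_comp_lTensor_comp_sigmaOf, hpartial, LinearMap.id_comp, sigmaOf_eq]

lemma twistedRHS_comp_flip_mk (a : A) :
    twistedRHS (psiOf φ) (sigmaOf ω) ∘ₗ (TensorProduct.assoc R H H A).toLinearMap ∘ₗ
        (TensorProduct.mk R (H ⊗[R] H) A).flip a =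
      sigmaOf (partialTwistedLHS φ ω ∘ₗ (TensorProduct.assoc R H H A).toLinearMap ∘ₗ
        (TensorProduct.mk R (H ⊗[R] H) A).flip a) := by
  have hpartial : partialTwistedLHS φ ω ∘ₗ (TensorProduct.assoc R H H A).toLinearMap ∘ₗ
      (TensorProduct.mk R (H ⊗[R] H) A).flip a =
      (mul' R A ∘ₗ TensorProduct.map (φ ∘ₗ lTensor H (φ ∘ₗ (TensorProduct.mk R H A).flip a))
        ω) ∘ₗ comul := by
    simp only [partialTwistedLHS, comp_assoc, lTensor_comp_assoc_comp_flip_mk, psiOf_comp_flip_mk]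
    simp only [psiOf, TensorProduct.comul_eq_tensorTensorTensorComm_comp_map, coassoc_simps]
  rw [hpartial]
  conv_rhs => rw [sigmaOf_eq, map_comp_comul_comp_comul]
  simp only [twistedRHS, comp_assoc, lTensor_comp_assoc_comp_flip_mk, psiOf_comp_flip_mk]
  simp only [psiOf, sigmaOf, TensorProduct.comul_eq_tensorTensorTensorComm_comp_map, coassoc_simps]

lemma twistedLHS_eq_of_partialTwisted (h3 : partialTwistedLHS φ ω ∘ₗ
      (TensorProduct.assoc R H H A).toLinearMap = partialTwistedRHS φ ω) :
    twistedLHS (psiOf φ) (sigmaOf ω) =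
      twistedRHS (psiOf φ) (sigmaOf ω) ∘ₗ (TensorProduct.assoc R H H A).toLinearMap := by
  refine TensorProduct.ext_comp_flip_mk fun a => ?_
  rw [twistedLHS_comp_flip_mk, comp_assoc, twistedRHS_comp_flip_mk, ← comp_assoc, h3]

lemma cocycleLHS_sigmaOf :
    cocycleLHS (sigmaOf ω) = TensorProduct.map (partialCocycleRHS ω)
      (mul' R H ∘ₗ rTensor H (mul' R H)) ∘ₗ comul := by
  -- `l` is comultiplied only once on each side, so `Δ l` may be taken to be a pure tensor, and
  -- then both sides are instances of `map_mul'_id_comp_lTensor_comp_sigmaOf`.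
  refine TensorProduct.ext_comp_flip_mk fun l => ?_
  have hσ : sigmaOf ω ∘ₗ (TensorProduct.mk R H H).flip l =
      TensorProduct.map ω (mul' R H) ∘ₗ
        (TensorProduct.tensorTensorTensorComm R H H H H).toLinearMap ∘ₗ
          (TensorProduct.mk R (H ⊗[R] H) (H ⊗[R] H)).flip (comul l) ∘ₗ comul := rfl
  have hΔ : (comul : (H ⊗[R] H) ⊗[R] H →ₗ[R] _) ∘ₗ (TensorProduct.mk R (H ⊗[R] H) H).flip l =
      (TensorProduct.tensorTensorTensorComm R (H ⊗[R] H) (H ⊗[R] H) H H).toLinearMap ∘ₗ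
        (TensorProduct.mk R _ (H ⊗[R] H)).flip (comul l) ∘ₗ comul := by
    rw [TensorProduct.comul_eq_tensorTensorTensorComm_comp_map]; rfl
  simp only [cocycleLHS, comp_assoc, rTensor_comp_flip_mk, lTensor_comp_assoc_comp_flip_mk_comp,
    hσ, hΔ]
  induction comul (R := R) l using TensorProduct.induction_on with
  | zero => simp
  | add Y Z hY hZ => simp only [map_add, add_comp, comp_add, lTensor_add, hY, hZ]
  | tmul l₁ l₂ =>
    have hpartial : partialCocycleRHS ω ∘ₗ (TensorProduct.mk R (H ⊗[R] H) H).flip l₁ =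
        (mul' R A ∘ₗ TensorProduct.map ω
          ((ω ∘ₗ (TensorProduct.mk R H H).flip l₁) ∘ₗ mul' R H)) ∘ₗ comul := by
      simp only [partialCocycleRHS, comp_assoc, rTensor_comp_flip_mk,
        lTensor_comp_assoc_comp_flip_mk_comp]
      simp only [sigmaOf_eq, coassoc_simps]
    have hmul : (mul' R H ∘ₗ rTensor H (mul' R H)) ∘ₗ
        (TensorProduct.mk R (H ⊗[R] H) H).flip l₂ =
          (mul' R H ∘ₗ (TensorProduct.mk R H H).flip l₂) ∘ₗ mul' R H := by
      ext; rfl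
    rw [TensorProduct.map_comp_tensorTensorTensorComm_comp_flip_tmul,
      TensorProduct.map_comp_tensorTensorTensorComm_comp_flip_tmul,
      map_mul'_id_comp_lTensor_comp_sigmaOf, hpartial, hmul]

lemma cocycleRHS_psiOf_sigmaOf :
    cocycleRHS (psiOf φ) (sigmaOf ω) = TensorProduct.map (partialCocycleLHS φ ω)
      (mul' R H ∘ₗ lTensor H (mul' R H)) ∘ₗ comul := by
  have hpartial : partialCocycleLHS φ ω = (mul' R A ∘ₗ TensorProduct.map (φ ∘ₗ lTensor H ω)
      (ω ∘ₗ lTensor H (mul' R H))) ∘ₗ comul := by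
    simp only [partialCocycleLHS, psiOf, sigmaOf_eq,
      TensorProduct.comul_eq_tensorTensorTensorComm_comp_map (C := H) (D := H ⊗[R] H),
      coassoc_simps]
  rw [hpartial, map_comp_comul_comp_comul]
  simp only [cocycleRHS, psiOf, sigmaOf_eq, Bialgebra.comul_comp_map_id_mul',
    TensorProduct.comul_eq_tensorTensorTensorComm_comp_map (C := H) (D := H ⊗[R] H), coassoc_simps]

lemma cocycleLHS_eq_of_partialCocycle (hco : partialCocycleLHS φ ω ∘ₗ
      (TensorProduct.assoc R H H H).toLinearMap = partialCocycleRHS ω) :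
    cocycleLHS (sigmaOf ω) =
      cocycleRHS (psiOf φ) (sigmaOf ω) ∘ₗ (TensorProduct.assoc R H H H).toLinearMap := by
  have hμ : (mul' R H ∘ₗ lTensor H (mul' R H)) ∘ₗ
      (TensorProduct.assoc R H H H).toLinearMap = mul' R H ∘ₗ rTensor H (mul' R H) := by
    ext; simp [mul_assoc]
  rw [cocycleLHS_sigmaOf, cocycleRHS_psiOf_sigmaOf, comp_assoc, TensorProduct.comul_comp_assoc,
    ← comp_assoc, ← map_comp, hco, hμ]

end PartialAction

theorem partialCrossedProduct_assoc_general (φ : H ⊗[R] A →ₗ[R] A)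
    (ω : H ⊗[R] H →ₗ[R] A)
    (h2 : IsPartiallyMultiplicative φ)
    (h3 : partialTwistedLHS φ ω ∘ₗ (TensorProduct.assoc R H H A).toLinearMap =
      partialTwistedRHS φ ω)
    (hco : partialCocycleLHS φ ω ∘ₗ (TensorProduct.assoc R H H H).toLinearMap =
      partialCocycleRHS ω) :
    wcpMul (psiOf φ) (sigmaOf ω)
        ∘ₗ LinearMap.rTensor (A ⊗[R] H) (wcpMul (psiOf φ) (sigmaOf ω)) =
      wcpMul (psiOf φ) (sigmaOf ω)
        ∘ₗ LinearMap.lTensor (A ⊗[R] H) (wcpMul (psiOf φ) (sigmaOf ω))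
        ∘ₗ (TensorProduct.assoc R (A ⊗[R] H) (A ⊗[R] H) (A ⊗[R] H)).toLinearMap :=
  wcpMul_assoc (psiMulLHS_eq_psiMulRHS_of_isPartiallyMultiplicative φ h2)
    (twistedLHS_eq_of_partialTwisted φ ω h3) (cocycleLHS_eq_of_partialCocycle φ ω hco)

/-- For a twisted partial action (φ, ω) satisfying the partial cocycle
condition and the unit conditions, the partial crossed product
(a ⊗ h)(b ⊗ g) = Σ a φ(h₍₁₎ ⊗ b) ω(h₍₂₎ ⊗ g₍₁₎) ⊗ h₍₃₎g₍₂₎ is associative. -/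
theorem partialCrossedProduct_assoc (φ : H ⊗[R] A →ₗ[R] A)
    (ω : H ⊗[R] H →ₗ[R] A)
    (h1 : ∀ a : A, φ ((1 : H) ⊗ₜ a) = a)
    (h2 : IsPartiallyMultiplicative φ)
    (h3 : partialTwistedLHS φ ω ∘ₗ (TensorProduct.assoc R H H A).toLinearMap =
      partialTwistedRHS φ ω)
    (h4 : ω = partialTwistedRHS φ ω ∘ₗ (TensorProduct.mk R (H ⊗[R] H) A).flip 1)
    (hco : partialCocycleLHS φ ω ∘ₗ (TensorProduct.assoc R H H H).toLinearMap =
      partialCocycleRHS ω)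
    (hunit : ∀ h : H, ω (h ⊗ₜ (1 : H)) = φ (h ⊗ₜ (1 : A)) ∧
      ω ((1 : H) ⊗ₜ h) = φ (h ⊗ₜ (1 : A))) :
    wcpMul (psiOf φ) (sigmaOf ω)
        ∘ₗ LinearMap.rTensor (A ⊗[R] H) (wcpMul (psiOf φ) (sigmaOf ω)) =
      wcpMul (psiOf φ) (sigmaOf ω)
        ∘ₗ LinearMap.lTensor (A ⊗[R] H) (wcpMul (psiOf φ) (sigmaOf ω))
        ∘ₗ (TensorProduct.assoc R (A ⊗[R] H) (A ⊗[R] H) (A ⊗[R] H)).toLinearMap :=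
  partialCrossedProduct_assoc_general φ ω h2 h3 hco
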